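/- Suppose f satisfies like-mindedness and the STP, and the communication graph G admits a strongly connected symmetric spanning subgraph. Then for any initial profile of partitions, the transfinite dialogue sequence (g^α) (iterating the update g, taking joins at limit ordinals) reaches, at some ordinal α*, a profile at which all agents' message functions coincide (a consensus); moreover |α*| ≤ n·|X|. -/

import Mathlib

/-- The block of the partition (setoid) `P` containing `x`. -/
def blk {X : Type*} (P : Setoid X) (x : X) : Set X := {y | P.r x y}

/-- The message sent at state `x` by an agent with information `P`,
given the message function `f`. -/
def msg {X A : Type*} (f : Set X → A) (P : Setoid X) (x : X) : A := f (blk P x)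

/-- The working partition of `P` induced by the message function `f`:
two states are equivalent iff the same message is sent at them. -/
def wp {X A : Type*} (f : Set X → A) (P : Setoid X) : Setoid X := Setoid.ker (msg f P)

/-- The sure thing principle: for any nonempty `S` and any partition of `S`
into nonempty blocks all mapped by `f` to `a`, `f S = a`. -/
def STPred {X A : Type*} (f : Set X → A) : Prop :=
  ∀ (S : Set X) (C : Set (Set X)) (a : A), S.Nonempty →
    (∀ B ∈ C, B.Nonempty) → C.PairwiseDisjoint id → ⋃₀ C = S →
    (∀ B ∈ C, f B = a) → f S = a

open scoped Classical in
/- The update function on profiles of partitions induced by the graph `G`: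
if `i` has senders, `i` refines her partition by joining (in the refinement
order: `⊓` in the `Setoid` order, which is the coarsest common refinement)
with the working partitions of all her senders; else her partition stays put.
Note: in the `Setoid` order, smaller = finer, so the paper's coarsening order
`P ≤ Q` ("Q refines P") is `Q ≤ P` here, the paper's join is `⊓`, and the
paper's meet is `⊔`. -/
noncomputable def update {X A I : Type*} (f : Set X → A) (G : I → I → Prop)
    (P : I → Setoid X) (i : I) : Setoid X :=
  if (∃ j, G j i) then ⨅ j ∈ {j | G j i}, (P i ⊓ wp f (P j)) else P i

universe u

/-! Every step of the dialogue refines each agent's partition and limit stages take meets,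
so each agent's partition decreases along the ordinals, and a step that changes the
profile strictly refines the partition of some agent. Along such a chain the number of
blocks strictly grows when `X` is finite, while for infinite `X` every strict step
separates a fresh pair of states; either way each agent refines strictly at most `|X|`
times, so the dialogue is stationary from a stage of cardinality at most `n·|X|` on.
At a stationary profile every agent knows the messages of her senders, so by the STP
neighbours in the symmetric subgraph send the same messages, and by strong connectivity
so does everyone. -/

open Cardinal

section Blocks

variable {X A : Type*}

theorem mem_blk_self (P : Setoid X) (x : X) : x ∈ blk P x := P.refl' x

theorem blk_eq_of_rel {P : Setoid X} {x y : X} (h : P.r x y) : blk P x = blk P y :=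
  Set.ext fun _ => ⟨P.trans' (P.symm' h), P.trans' h⟩

theorem blk_subset_of_le {S P : Setoid X} (hSP : S ≤ P) {x y : X} (hxy : P.r x y) :
    blk S y ⊆ blk P x :=
  fun _ hz => P.trans' hxy (hSP hz)

theorem le_wp_self (f : Set X → A) (P : Setoid X) : P ≤ wp f P :=
  fun _ _ h => congrArg f (blk_eq_of_rel h)

theorem STPred.eq_of_forall_blk {f : Set X → A} (hstp : STPred f) (S : Setoid X) {T : Set X}
    (hT : T.Nonempty) (hsat : ∀ y ∈ T, blk S y ⊆ T) {a : A}
    (ha : ∀ y ∈ T, f (blk S y) = a) : f T = a := by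
  refine hstp T (blk S '' T) a hT ?_ ?_ ?_ ?_
  · rintro _ ⟨y, -, rfl⟩
    exact ⟨y, mem_blk_self S y⟩
  · rintro _ ⟨y, -, rfl⟩ _ ⟨y', -, rfl⟩ hne
    refine Set.disjoint_left.2 fun z hz hz' => hne ?_
    rw [blk_eq_of_rel hz, blk_eq_of_rel hz']
  · refine Set.Subset.antisymm ?_ fun z hz => ⟨blk S z, ⟨z, hz, rfl⟩, mem_blk_self S z⟩
    rintro z ⟨_, ⟨y, hy, rfl⟩, hz⟩
    exact hsat y hy hz
  · rintro _ ⟨y, hy, rfl⟩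
    exact ha y hy

/-- On the set `T` of states where neither message changes, the STP evaluates `f T` once
along `Q`-blocks and once along `R`-blocks. -/
theorem msg_eq_of_le_wp {f : Set X → A} (hstp : STPred f) {Q R : Setoid X}
    (hQR : Q ≤ wp f R) (hRQ : R ≤ wp f Q) : msg f Q = msg f R := by
  funext x
  set T := blk (wp f Q) x ∩ blk (wp f R) x
  have hxT : x ∈ T := ⟨mem_blk_self _ x, mem_blk_self _ x⟩
  have hsat : ∀ S : Setoid X, S ≤ wp f Q → S ≤ wp f R → ∀ y ∈ T, blk S y ⊆ T :=
    fun S hSQ hSR y hy =>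
      Set.subset_inter (blk_subset_of_le hSQ hy.1) (blk_subset_of_le hSR hy.2)
  have hTQ : f T = msg f Q x :=
    hstp.eq_of_forall_blk Q ⟨x, hxT⟩ (hsat Q (le_wp_self f Q) hQR) fun _ hy => hy.1.symm
  have hTR : f T = msg f R x :=
    hstp.eq_of_forall_blk R ⟨x, hxT⟩ (hsat R hRQ (le_wp_self f R)) fun _ hy => hy.2.symm
  exact hTQ.symm.trans hTR

end Blocks

section Update

variable {X A I : Type*} {f : Set X → A} {G : I → I → Prop} {P : I → Setoid X}

theorem update_le (i : I) : update f G P i ≤ P i := by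
  unfold update
  split_ifs with h
  · obtain ⟨j, hj⟩ := h
    exact (iInf₂_le j hj).trans inf_le_left
  · exact le_rfl

theorem le_wp_of_update_eq {i j : I} (hfix : update f G P i = P i) (hji : G j i) :
    P i ≤ wp f (P j) := by
  rw [← hfix, update, if_pos ⟨j, hji⟩]
  exact (iInf₂_le j hji).trans inf_le_right

theorem msg_eq_of_update_eq (hstp : STPred f) {G' : I → I → Prop}
    (hsub : ∀ i j, G' i j → G i j) (hsymm : ∀ i j, G' i j → G' j i)
    (hconn : ∀ i j : I, i ≠ j → Relation.TransGen G' i j) (hfix : update f G P = P)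
    (i j : I) : msg f (P i) = msg f (P j) := by
  have hedge : ∀ a b, G' a b → msg f (P a) = msg f (P b) := fun a b hab =>
    msg_eq_of_le_wp hstp (le_wp_of_update_eq (congrFun hfix a) (hsub b a (hsymm a b hab)))
      (le_wp_of_update_eq (congrFun hfix b) (hsub a b hab))
  rcases eq_or_ne i j with rfl | hij
  · rfl
  exact Relation.transGen_eq_self.le _ _ ((hconn i j hij).lift (fun k => msg f (P k)) hedge)

end Update

section Chain

theorem Setoid.map_of_le_surjective {X : Type*} {r t : Setoid X} (h : r ≤ t) :
    Function.Surjective (Setoid.map_of_le h) :=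
  Quotient.ind fun a => ⟨Quotient.mk r a, rfl⟩

theorem Setoid.card_quotient_le_of_le {X : Type*} [Finite X] {r t : Setoid X} (h : r ≤ t) :
    Nat.card (Quotient t) ≤ Nat.card (Quotient r) :=
  Nat.card_le_card_of_surjective _ (Setoid.map_of_le_surjective h)

theorem Setoid.card_quotient_lt_of_lt {X : Type*} [Finite X] {r t : Setoid X} (h : r < t) :
    Nat.card (Quotient t) < Nat.card (Quotient r) := by
  refine (card_quotient_le_of_le h.le).lt_of_ne fun hc => h.not_ge fun x y hxy => ?_
  have hinj := ((map_of_le_surjective h.le).bijective_of_nat_card_le hc.ge).injective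
  exact Quotient.exact (hinj (a₁ := Quotient.mk r x) (a₂ := Quotient.mk r y) (Quotient.sound hxy))

universe v w

variable {ι : Type w} {X : Type v} [LinearOrder ι] [SuccOrder ι] {P : ι → Setoid X} {s : Set ι}

theorem exists_injective_fin_of_succ_lt [Finite X] (hP : Antitone P)
    (hs : ∀ β ∈ s, P (Order.succ β) < P β) : ∃ g : s → Fin (Nat.card X), g.Injective := by
  have hlt : ∀ β ∈ s, Nat.card (Quotient (P β)) < Nat.card (Quotient (P (Order.succ β))) :=
    fun β hβ => Setoid.card_quotient_lt_of_lt (hs β hβ)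
  have hmono : StrictMonoOn (fun β => Nat.card (Quotient (P β))) s := fun β hβ β' _ h =>
    (hlt β hβ).trans_le (Setoid.card_quotient_le_of_le (hP (Order.succ_le_of_lt h)))
  refine ⟨fun β => ⟨Nat.card (Quotient (P β)), (hlt β β.2).trans_le ?_⟩, fun β β' h =>
    Subtype.ext (hmono.injOn β.2 β'.2 (congrArg Fin.val h))⟩
  exact Nat.card_le_card_of_surjective _ Quotient.mk_surjective

theorem exists_injective_prod_of_succ_lt (hP : Antitone P)
    (hs : ∀ β ∈ s, P (Order.succ β) < P β) : ∃ g : s → X × X, g.Injective := by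
  have hsplit : ∀ β : s, ∃ p : X × X, P β p.1 p.2 ∧ ¬ P (Order.succ β) p.1 p.2 := fun β => by
    obtain ⟨x, y, hxy, hxy'⟩ : ∃ x y, P β x y ∧ ¬ P (Order.succ β) x y := by
      simpa [Setoid.le_def] using (hs β β.2).not_ge
    exact ⟨(x, y), hxy, hxy'⟩
  choose g hg hg' using hsplit
  refine ⟨g, Function.Injective.of_lt_imp_ne fun β β' h hg_eq => hg' β ?_⟩
  exact hg_eq ▸ hP (Order.succ_le_of_lt h) (hg β')

theorem lift_mk_le_of_succ_lt (hP : Antitone P) (hs : ∀ β ∈ s, P (Order.succ β) < P β) :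
    lift.{v} #s ≤ lift.{w} #X := by
  rcases finite_or_infinite X with hX | hX
  · obtain ⟨g, hg⟩ := exists_injective_fin_of_succ_lt hP hs
    have h : #s ≤ Nat.card X := by simpa using lift_mk_le_lift_mk_of_injective hg
    rw [← Nat.cast_card (α := X), lift_natCast]
    exact (lift_le.{v}.2 h).trans_eq (lift_natCast _)
  · obtain ⟨g, hg⟩ := exists_injective_prod_of_succ_lt hP hs
    simpa [mul_eq_self (aleph0_le_mk X)] using lift_mk_le_lift_mk_of_injective hg

end Chain

section Dialogue

variable {X A I : Type*} (f : Set X → A) (G : I → I → Prop) (P0 : I → Setoid X)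

noncomputable def dialogue : Ordinal.{u} → I → Setoid X := fun α =>
  Ordinal.limitRecOn α P0 (fun _ P => update f G P)
    fun l _ P i => sInf (Set.range fun β : Set.Iio l => P β.1 β.2 i)

theorem dialogue_zero : dialogue f G P0 0 = P0 := Ordinal.limitRecOn_zero _ _ _

theorem dialogue_add_one (α : Ordinal.{u}) :
    dialogue f G P0 (α + 1) = update f G (dialogue f G P0 α) :=
  Ordinal.limitRecOn_add_one _ _ _ _

theorem dialogue_limit {l : Ordinal.{u}} (hl : Order.IsSuccLimit l) (i : I) :
    dialogue f G P0 l i = sInf ((fun β => dialogue f G P0 β i) '' Set.Iio l) := by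
  rw [dialogue, Ordinal.limitRecOn_limit _ _ _ _ hl, Set.image_eq_range]
  rfl

theorem dialogue_antitone (i : I) : Antitone fun α => dialogue f G P0 α i := by
  intro α β hαβ
  dsimp only
  induction β using Ordinal.limitRecOn with
  | zero => rw [nonpos_iff_eq_zero.1 hαβ]
  | add_one β ih =>
    rcases hαβ.lt_or_eq with h | rfl
    · rw [dialogue_add_one]
      exact (update_le i).trans (ih (Order.lt_add_one_iff.1 h))
    · exact le_rfl
  | limit l hl _ =>
    rcases hαβ.lt_or_eq with h | rfl
    · rw [dialogue_limit f G P0 hl]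
      exact sInf_le ⟨α, h, rfl⟩
    · exact le_rfl

end Dialogue

theorem card_le_of_forall_lt_add_one_ne {I X : Type u} [Fintype I]
    {seq : Ordinal.{u} → I → Setoid X} (hseq : ∀ i, Antitone fun α => seq α i)
    {α : Ordinal.{u}} (hα : ∀ β < α, seq (β + 1) ≠ seq β) :
    α.card ≤ Fintype.card I * #X := by
  set s : I → Set Ordinal.{u} := fun i => {β | seq (Order.succ β) i < seq β i}
  have hcover : Set.Iio α ⊆ ⋃ i, s i := fun β hβ => by
    obtain ⟨i, hi⟩ := Function.ne_iff.1 (hα β hβ)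
    rw [← Order.succ_eq_add_one] at hi
    exact Set.mem_iUnion.2 ⟨i, (hseq i (Order.le_succ β)).lt_of_ne hi⟩
  have hs : ∀ i, #(s i) ≤ lift.{u + 1} #X := fun i => by
    rw [← lift_id'.{u, u + 1} #(s i)]
    exact lift_mk_le_of_succ_lt (hseq i) fun β hβ => hβ
  rw [← lift_le.{u + 1}, ← mk_Iio_ordinal]
  calc #(Set.Iio α) ≤ #(⋃ i, s i) := mk_le_mk_of_subset hcover
    _ ≤ sum fun i => #(s i) := (lift_id'.{u, u + 1} _).symm.trans_le mk_iUnion_le_sum_mk_lift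
    _ ≤ sum fun _ : I => lift.{u + 1} #X := sum_le_sum _ _ hs
    _ = lift.{u + 1} (Fintype.card I * #X) := by simp

theorem exists_add_one_eq_of_antitone {I X : Type u} [Fintype I]
    {seq : Ordinal.{u} → I → Setoid X} (hseq : ∀ i, Antitone fun α => seq α i) :
    ∃ α, seq (α + 1) = seq α := by
  by_contra! h
  have hcard := card_le_of_forall_lt_add_one_ne hseq
    (α := (Order.succ (Fintype.card I * #X)).ord) fun β _ => h β
  rw [card_ord] at hcard
  exact (Order.lt_succ _).not_ge hcard

theorem stmt_12_general {X : Type u} {A I : Type u} [Fintype I]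
    (f : Set X → A) (hstp : STPred f)
    (G G' : I → I → Prop) (hsub : ∀ i j, G' i j → G i j)
    (hsymm : ∀ i j, G' i j → G' j i)
    (hconn : ∀ i j : I, i ≠ j → Relation.TransGen G' i j)
    (P0 : I → Setoid X) :
    ∃ seq : Ordinal.{u} → (I → Setoid X),
      seq 0 = P0 ∧
      (∀ α, seq (α + 1) = update f G (seq α)) ∧
      (∀ l : Ordinal.{u}, Order.IsSuccLimit l →
        ∀ i, seq l i = sInf ((fun β => seq β i) '' Set.Iio l)) ∧
      (∃ α : Ordinal.{u}, ∀ i j, msg f (seq α i) = msg f (seq α j)) ∧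
      (sInf {α : Ordinal.{u} | seq (α + 1) = seq α}).card ≤
        (Fintype.card I : Cardinal.{u}) * Cardinal.mk X := by
  have hanti := dialogue_antitone f G P0
  set S := {α | dialogue f G P0 (α + 1) = dialogue f G P0 α}
  have hfix : update f G (dialogue f G P0 (sInf S)) = dialogue f G P0 (sInf S) :=
    (dialogue_add_one f G P0 _).symm.trans (csInf_mem (exists_add_one_eq_of_antitone hanti))
  exact ⟨dialogue f G P0, dialogue_zero f G P0, dialogue_add_one f G P0,
    fun l hl => dialogue_limit f G P0 hl, ⟨sInf S, msg_eq_of_update_eq hstp hsub hsymm hconn hfix⟩,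
    card_le_of_forall_lt_add_one_ne hanti fun β hβ hβS => notMem_of_lt_csInf' hβ hβS⟩

/-- Main theorem: Under like-mindedness (built into `msg`), the STP, and
a strongly connected symmetric spanning subgraph, the transfinite dialogue starting
from any initial profile (iterating `update`, taking joins — `sInf` in the `Setoid`
order — at limit ordinals) exists, reaches a consensus at some stage, and the least
ordinal `α*` at which the sequence stabilizes satisfies `|α*| ≤ n·|X|`. -/
theorem stmt_12 {X : Type u} {A I : Type u} [Fintype I] (hn : 2 ≤ Fintype.card I)
    [Nonempty X] (f : Set X → A) (hstp : STPred f)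
    (G G' : I → I → Prop) (hsub : ∀ i j, G' i j → G i j)
    (hsymm : ∀ i j, G' i j → G' j i)
    (hconn : ∀ i j : I, i ≠ j → Relation.TransGen G' i j)
    (P0 : I → Setoid X) :
    ∃ seq : Ordinal.{u} → (I → Setoid X),
      seq 0 = P0 ∧
      (∀ α, seq (α + 1) = update f G (seq α)) ∧
      (∀ l : Ordinal.{u}, Order.IsSuccLimit l →
        ∀ i, seq l i = sInf ((fun β => seq β i) '' Set.Iio l)) ∧
      (∃ α : Ordinal.{u}, ∀ i j, msg f (seq α i) = msg f (seq α j)) ∧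
      (sInf {α : Ordinal.{u} | seq (α + 1) = seq α}).card ≤
        (Fintype.card I : Cardinal.{u}) * Cardinal.mk X :=
  stmt_12_general f hstp G G' hsub hsymm hconn P0
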